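/- For every k-ary game v, the importance index φ with φ_i(v) = Σ_{x_{-i} ∈ L_{-i}} [(n − s(x_{-i}) − 1)! k(x_{-i})! / (n + k(x_{-i}) − s(x_{-i}))!] (v(x_{-i}, k_i) − v(x_{-i}, 0_i)) satisfies Σ_{i∈N} φ_i(v) = Σ_{x ∈ {0,…,k−1}^N} (v(x+1) − v(x)), where x+1 = (x_1+1,…,x_n+1). -/

import Mathlib

open Finset
open scoped Classical

/-- The top level `k` of `L_i`. -/
def top (k : ℕ) : Fin (k+1) := ⟨k, by omega⟩

/-- `s(x_{-i})`: number of nonzero components of `x_{-i}`. -/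
def sOut {n k : ℕ} (i : Fin n) (x : Fin n → Fin (k+1)) : ℕ :=
  (univ.filter (fun j : Fin n => j ≠ i ∧ (x j : ℕ) > 0)).card

/-- `k(x_{-i})`: number of components of `x_{-i}` equal to `k`. -/
def kOut {n k : ℕ} (i : Fin n) (x : Fin n → Fin (k+1)) : ℕ :=
  (univ.filter (fun j : Fin n => j ≠ i ∧ (x j : ℕ) = k)).card

/-- The importance index
`φ_i(v) = Σ_{x_{-i}} (n-s-1)! k! / (n+k-s)! (v(x_{-i},k_i) - v(x_{-i},0_i))`,
where `L_{-i}` is identified with `{x ∈ L | x i = 0}`. -/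
noncomputable def impIndex {n k : ℕ} (i : Fin n) (v : (Fin n → Fin (k+1)) → ℝ) : ℝ :=
  ∑ x ∈ univ.filter (fun x : Fin n → Fin (k+1) => x i = 0),
    (((n - sOut i x - 1).factorial * (kOut i x).factorial : ℕ) : ℝ) /
        ((n + kOut i x - sOut i x).factorial : ℝ) *
      (v (Function.update x i (top k)) - v (Function.update x i 0))

/-- `x + 1 = (x_1+1, …, x_n+1)` (capped at `k`). -/
def incrAll {n k : ℕ} (x : Fin n → Fin (k+1)) : Fin n → Fin (k+1) :=
  fun i => ⟨min ((x i : ℕ) + 1) k, by omega⟩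


/-!
Write `φ_i(v) = Σ_{y_i = k} c_i(y) v(y) - Σ_{y_i = 0} c_i(y) v(y)`, where the weight `c_i(y)`
depends only on `y_{-i}`. Exchanging the sums, for `k ≥ 1` the coefficient of `v(y)` in
`Σ_i φ_i(v)` is `K · a! (K-1)! / (a+K)! - a · (a-1)! K! / (a+K)!`, where `a` and `K` count the
coordinates of `y` equal to `0` and to `k`. Since `m · (m-1)! = m! - [m = 0]`, this is
`[a = 0] - [K = 0]`, so `Σ_i φ_i(v) = Σ_{y > 0} v(y) - Σ_{y < k} v(y)`, and the substitution
`y = x + 1` gives the right-hand side.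
-/

noncomputable def impWeight {n k : ℕ} (i : Fin n) (x : Fin n → Fin (k+1)) : ℝ :=
  (((n - sOut i x - 1).factorial * (kOut i x).factorial : ℕ) : ℝ) /
    ((n + kOut i x - sOut i x).factorial : ℝ)

lemma mul_factorial_div_sub_mul_factorial_div (a b : ℕ) :
    (b : ℝ) * (((a.factorial * (b - 1).factorial : ℕ) : ℝ) / ((a + b).factorial : ℝ)) -
      (a : ℝ) * ((((a - 1).factorial * b.factorial : ℕ) : ℝ) / ((a + b).factorial : ℝ)) =
      (if a = 0 then 1 else 0) - (if b = 0 then 1 else 0) := by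
  have hab : ((a + b).factorial : ℝ) ≠ 0 := by positivity
  have key : ∀ m : ℕ, (m : ℝ) * (m - 1).factorial = m.factorial - if m = 0 then 1 else 0 := by
    intro m
    rcases eq_or_ne m 0 with rfl | hm
    · simp
    · rw [if_neg hm, sub_zero, ← Nat.mul_factorial_pred hm]; push_cast; rfl
  field_simp
  push_cast
  calc (b : ℝ) * (a.factorial * (b - 1).factorial) - a * ((a - 1).factorial * b.factorial)
      = (b * (b - 1).factorial) * a.factorial - (a * (a - 1).factorial) * b.factorial := by ring
    _ = _ := by
      rw [key, key]
      rcases eq_or_ne a 0 with rfl | ha <;> rcases eq_or_ne b 0 with rfl | hb <;>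
        simp [*, mul_comm]

section Update

variable {n k : ℕ} (i : Fin n) (x : Fin n → Fin (k+1)) (a : Fin (k+1))

lemma sOut_update_self : sOut i (Function.update x i a) = sOut i x := by
  unfold sOut
  congr 1
  exact filter_congr fun j _ => and_congr_right fun hj => by rw [Function.update_of_ne hj]

lemma kOut_update_self : kOut i (Function.update x i a) = kOut i x := by
  unfold kOut
  congr 1
  exact filter_congr fun j _ => and_congr_right fun hj => by rw [Function.update_of_ne hj]

lemma impWeight_update_self : impWeight i (Function.update x i a) = impWeight i x := by
  rw [impWeight, impWeight, sOut_update_self, kOut_update_self]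

end Update

lemma impIndex_eq_sub {n k : ℕ} (i : Fin n) (v : (Fin n → Fin (k+1)) → ℝ) :
    impIndex i v =
      ∑ y ∈ univ.filter (fun y : Fin n → Fin (k+1) => y i = top k), impWeight i y * v y -
        ∑ x ∈ univ.filter (fun x : Fin n → Fin (k+1) => x i = 0), impWeight i x * v x := by
  have hupdate : ∀ (a : Fin (k+1)), ∀ x ∈ univ.filter (fun x : Fin n → Fin (k+1) => x i = a),
      Function.update x i a = x := fun a x hx => by
    rw [← (mem_filter.1 hx).2, Function.update_eq_self]
  have hshift : ∑ x ∈ univ.filter (fun x : Fin n → Fin (k+1) => x i = 0),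
      impWeight i x * v (Function.update x i (top k)) =
        ∑ y ∈ univ.filter (fun y : Fin n → Fin (k+1) => y i = top k), impWeight i y * v y := by
    refine sum_nbij' (Function.update · i (top k)) (Function.update · i 0) ?_ ?_ ?_ ?_ ?_
    · simp
    · simp
    · intro x hx
      simp only [Function.update_idem, hupdate 0 x hx]
    · intro y hy
      simp only [Function.update_idem, hupdate (top k) y hy]
    · intro x _
      rw [impWeight_update_self]
  rw [← hshift, ← sum_sub_distrib, impIndex]
  refine sum_congr rfl fun x hx => ?_
  rw [hupdate 0 x hx, mul_sub]
  rfl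

lemma sum_impIndex {n k : ℕ} (v : (Fin n → Fin (k+1)) → ℝ) :
    ∑ i : Fin n, impIndex i v =
      ∑ y, (∑ i ∈ univ.filter (fun i => y i = top k), impWeight i y -
        ∑ i ∈ univ.filter (fun i => y i = 0), impWeight i y) * v y := by
  simp only [impIndex_eq_sub, sum_filter, sub_mul, sum_mul, sum_sub_distrib, ite_mul, zero_mul]
  rw [sum_comm, sum_comm (s := univ) (t := (univ : Finset (Fin n → Fin (k+1))))]

section Counting

variable {n k : ℕ} (i : Fin n) (x : Fin n → Fin (k+1))

lemma kOut_eq_card_erase : kOut i x = #((univ.filter fun j => x j = top k).erase i) := by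
  unfold kOut
  congr 1
  ext j
  simp [top, Fin.ext_iff, and_comm]

lemma sOut_add_card_erase_eq_zero :
    sOut i x + #((univ.filter fun j => x j = 0).erase i) = n - 1 := by
  have hs : sOut i x = #((univ.erase i).filter fun j => x j ≠ 0) := by
    unfold sOut
    congr 1
    ext j
    simp only [mem_filter, mem_univ, mem_erase, true_and, and_true, ne_eq, Fin.ext_iff,
      Fin.val_zero]
    omega
  have hz : (univ.filter fun j => x j = 0).erase i = (univ.erase i).filter fun j => ¬ x j ≠ 0 := by
    ext j
    simp [and_comm]
  rw [hs, hz, card_filter_add_card_filter_not, card_erase_of_mem (mem_univ i),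
    card_univ, Fintype.card_fin]

end Counting

section Weights

variable {n k : ℕ} {i : Fin n} {x : Fin n → Fin (k+1)}

lemma top_ne_zero_of_pos (hk : 0 < k) : top k ≠ 0 := by
  simp [top, Fin.ext_iff]; omega

lemma impWeight_of_eq_top (hk : 0 < k) (hi : x i = top k) :
    impWeight i x =
      (((#(univ.filter fun j => x j = 0)).factorial *
          (#(univ.filter fun j => x j = top k) - 1).factorial : ℕ) : ℝ) /
        ((#(univ.filter fun j => x j = 0) + #(univ.filter fun j => x j = top k)).factorial : ℝ) := by
  have hz : i ∉ univ.filter fun j => x j = 0 := by simp [hi, top_ne_zero_of_pos hk]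
  have hs := sOut_add_card_erase_eq_zero i x
  have hn := i.pos
  have hK := card_erase_add_one (s := univ.filter fun j => x j = top k) (by simpa using hi)
  rw [erase_eq_of_notMem hz] at hs
  rw [← kOut_eq_card_erase] at hK
  have e1 : n - sOut i x - 1 = #(univ.filter fun j => x j = 0) := by omega
  have e2 : n + kOut i x - sOut i x = #(univ.filter fun j => x j = 0) + (kOut i x + 1) := by omega
  unfold impWeight
  rw [e1, e2, ← hK, Nat.add_sub_cancel]

lemma impWeight_of_eq_zero (hk : 0 < k) (hi : x i = 0) :
    impWeight i x =
      (((#(univ.filter fun j => x j = 0) - 1).factorial *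
          (#(univ.filter fun j => x j = top k)).factorial : ℕ) : ℝ) /
        ((#(univ.filter fun j => x j = 0) + #(univ.filter fun j => x j = top k)).factorial : ℝ) := by
  have ht : i ∉ univ.filter fun j => x j = top k := by simp [hi, (top_ne_zero_of_pos hk).symm]
  have hs := sOut_add_card_erase_eq_zero i x
  have hn := i.pos
  have hZ := card_erase_add_one (s := univ.filter fun j => x j = 0) (by simpa using hi)
  have e1 : n - sOut i x - 1 = #(univ.filter fun j => x j = 0) - 1 := by omega
  have e2 : n + kOut i x - sOut i x = #(univ.filter fun j => x j = 0) + kOut i x := by omega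
  rw [← erase_eq_of_notMem ht, ← kOut_eq_card_erase]
  unfold impWeight
  rw [e1, e2]

end Weights

lemma sum_impWeight_top_sub_sum_impWeight_zero {n k : ℕ} (x : Fin n → Fin (k+1)) :
    ∑ i ∈ univ.filter (fun i => x i = top k), impWeight i x -
        ∑ i ∈ univ.filter (fun i => x i = 0), impWeight i x =
      (if ∀ j, 0 < (x j : ℕ) then 1 else 0) - (if ∀ j, (x j : ℕ) < k then 1 else 0) := by
  rcases Nat.eq_zero_or_pos k with rfl | hk
  · have hpos : (∀ j, 0 < (x j : ℕ)) ↔ ∀ j, (x j : ℕ) < 0 := by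
      constructor <;> intro h j <;> have := h j <;> omega
    rw [if_congr hpos rfl rfl, sub_self, sub_eq_zero, show top 0 = 0 from rfl]
  have hZ : #(univ.filter fun j => x j = 0) = 0 ↔ ∀ j, 0 < (x j : ℕ) := by
    simp [filter_eq_empty_iff, Fin.pos_iff_ne_zero]
  have hT : #(univ.filter fun j => x j = top k) = 0 ↔ ∀ j, (x j : ℕ) < k := by
    simp only [card_eq_zero, filter_eq_empty_iff, mem_univ, true_imp_iff, top, Fin.ext_iff]
    exact forall_congr' fun j => by have := (x j).isLt; omega
  rw [sum_congr rfl fun i hi => impWeight_of_eq_top hk (mem_filter.1 hi).2,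
    sum_congr rfl fun i hi => impWeight_of_eq_zero hk (mem_filter.1 hi).2,
    sum_const, sum_const, nsmul_eq_mul, nsmul_eq_mul, mul_factorial_div_sub_mul_factorial_div,
    if_congr hZ rfl rfl, if_congr hT rfl rfl]

lemma sum_incrAll {n k : ℕ} {M : Type*} [AddCommMonoid M] (f : (Fin n → Fin (k+1)) → M) :
    ∑ x ∈ univ.filter (fun x : Fin n → Fin (k+1) => ∀ j, (x j : ℕ) < k), f (incrAll x) =
      ∑ y ∈ univ.filter (fun y : Fin n → Fin (k+1) => ∀ j, 0 < (y j : ℕ)), f y := by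
  refine sum_nbij' incrAll (fun y j => ⟨(y j : ℕ) - 1, by omega⟩) ?_ ?_ ?_ ?_ fun _ _ => rfl
  · intro x hx
    simp only [mem_filter, mem_univ, true_and, incrAll] at hx ⊢
    intro j; have := hx j; omega
  · intro y hy
    simp only [mem_filter, mem_univ, true_and] at hy ⊢
    intro j; have := hy j; omega
  · intro x hx
    simp only [mem_filter, mem_univ, true_and] at hx
    funext j; have := hx j; ext; simp only [incrAll]; omega
  · intro y hy
    simp only [mem_filter, mem_univ, true_and] at hy
    funext j; have := hy j; ext; simp only [incrAll]; omega

theorem stmt_13_general (n k : ℕ) (v : (Fin n → Fin (k+1)) → ℝ) :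
    ∑ i : Fin n, impIndex i v =
      ∑ x ∈ univ.filter (fun x : Fin n → Fin (k+1) => ∀ j, (x j : ℕ) < k),
        (v (incrAll x) - v x) := by
  rw [sum_impIndex, sum_sub_distrib, sum_incrAll v]
  simp only [sum_impWeight_top_sub_sum_impWeight_zero, sub_mul, ite_mul, one_mul, zero_mul,
    sum_sub_distrib, sum_ite, sum_const_zero, add_zero]

theorem stmt_13 (n k : ℕ) (v : (Fin n → Fin (k+1)) → ℝ) (hv : v 0 = 0) :
    ∑ i : Fin n, impIndex i v =
      ∑ x ∈ univ.filter (fun x : Fin n → Fin (k+1) => ∀ j, (x j : ℕ) < k),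
        (v (incrAll x) - v x) :=
  stmt_13_general n k v
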